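/- Suppose (u_h, r_h, w_h, p_h, s_h) solves the dissipative semi-discrete LDG Scheme D2 on [0,T]. Then for every t ∈ [0,T]: (d/dt) ∫_a^b w_h(t,x) dx = 0 (conservation of the quantity E₁) and (d/dt) ∫_a^b u_h(t,x)² dx ≤ 0 (dissipation of the energy E₂). -/

import Mathlib

open Polynomial Set

noncomputable section

namespace FW

variable {N : ℕ}

/-- Minus trace `ω⁻` at interface `j+1/2` (right end of cell `j`). -/
def trM (x : Fin (N + 1) → ℝ) (ω : Fin N → Polynomial ℝ) (j : Fin N) : ℝ :=
  (ω j).eval (x j.succ)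

/-- Plus trace `ω⁺` at interface `j+1/2` (left end of the next cell, cyclically). -/
def trP [NeZero N] (x : Fin (N + 1) → ℝ) (ω : Fin N → Polynomial ℝ) (j : Fin N) : ℝ :=
  (ω (j + 1)).eval (x (j + 1).castSucc)

/-- Average trace `{ω}`. -/
def trA [NeZero N] (x : Fin (N + 1) → ℝ) (ω : Fin N → Polynomial ℝ) (j : Fin N) : ℝ :=
  (trP x ω j + trM x ω j) / 2

/-- Jump `[ω]`. -/
def jmp [NeZero N] (x : Fin (N + 1) → ℝ) (ω : Fin N → Polynomial ℝ) (j : Fin N) : ℝ :=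
  trP x ω j - trM x ω j

/-- Cell L² pairing `(u, φ)_{I_j}` of a piecewise polynomial with a test polynomial. -/
def ipj (x : Fin (N + 1) → ℝ) (u : Fin N → Polynomial ℝ) (j : Fin N) (φ : Polynomial ℝ) : ℝ :=
  ∫ t in (x j.castSucc)..(x j.succ), (u j).eval t * φ.eval t

/-- Cell pairing `(f∘u, φ)_{I_j}`. -/
def ipfj (x : Fin (N + 1) → ℝ) (f : ℝ → ℝ) (u : Fin N → Polynomial ℝ) (j : Fin N)
    (φ : Polynomial ℝ) : ℝ :=
  ∫ t in (x j.castSucc)..(x j.succ), f ((u j).eval t) * φ.eval t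

/-- Boundary pairing `⟨g, φ⟩_{I_j}` for interface values `g`. -/
def bdj [NeZero N] (x : Fin (N + 1) → ℝ) (g : Fin N → ℝ) (j : Fin N) (φ : Polynomial ℝ) : ℝ :=
  g j * φ.eval (x j.succ) - g (j - 1) * φ.eval (x j.castSucc)

/-- Membership in the space `V_h^k` of piecewise polynomials of degree at most `k`. -/
def memV (k : ℕ) (ω : Fin N → Polynomial ℝ) : Prop :=
  ∀ j, (ω j).degree ≤ (k : WithBot ℕ)

/-- `L⁻(ω, φ)`. -/
def Lm [NeZero N] (x : Fin (N + 1) → ℝ) (ω φ : Fin N → Polynomial ℝ) : ℝ :=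
  ∑ j, (-(ipj x ω j (derivative (φ j))) + bdj x (trM x ω) j (φ j))

/-- `L⁺(ω, φ)`. -/
def Lp [NeZero N] (x : Fin (N + 1) → ℝ) (ω φ : Fin N → Polynomial ℝ) : ℝ :=
  ∑ j, (-(ipj x ω j (derivative (φ j))) + bdj x (trP x ω) j (φ j))

/-- `L^c(ω, φ)`. -/
def Lc [NeZero N] (x : Fin (N + 1) → ℝ) (ω φ : Fin N → Polynomial ℝ) : ℝ :=
  ∑ j, (-(ipj x ω j (derivative (φ j))) + bdj x (trA x ω) j (φ j))

/-- Godunov numerical flux. -/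
def godunov (f : ℝ → ℝ) (c d : ℝ) : ℝ :=
  if c < d then sInf (f '' Set.Icc c d) else sSup (f '' Set.Icc d c)

/-- Conservative numerical flux for `f(u) = u^p/p`, `F(u) = u^(p+1)/(p(p+1))`. -/
def consFlux (p : ℕ) (c d : ℝ) : ℝ :=
  if c = d then c ^ p / (p : ℝ)
  else (d ^ (p + 1) / ((p : ℝ) * ((p : ℝ) + 1)) - c ^ (p + 1) / ((p : ℝ) * ((p : ℝ) + 1))) / (d - c)

/-- Dissipative (Godunov-flux) nonlinear form `N^d`. -/
def Nd [NeZero N] (x : Fin (N + 1) → ℝ) (f : ℝ → ℝ) (ω φ : Fin N → Polynomial ℝ) : ℝ :=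
  ∑ j, (-(ipfj x f ω j (derivative (φ j)))
    + bdj x (fun i => godunov f (trM x ω i) (trP x ω i)) j (φ j))

/-- Conservative-flux nonlinear form `N^c`. -/
def Nc [NeZero N] (x : Fin (N + 1) → ℝ) (p : ℕ) (ω φ : Fin N → Polynomial ℝ) : ℝ :=
  ∑ j, (-(ipfj x (fun w => w ^ p / (p : ℝ)) ω j (derivative (φ j)))
    + bdj x (fun i => consFlux p (trM x ω i) (trP x ω i)) j (φ j))

end FW

/-!
Testing (iii) and (v) with the constant `1` leaves only interface terms, which telescope
around the periodic mesh, so `∫ w_h` is conserved.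

For the energy, let `(v, q) ∈ V_h^k × V_h^k` solve the discrete elliptic problem
`(q, φ) = L⁺(v, φ)`, `(v, φ) - L⁻(q, φ) = (u_h, φ)`, i.e. `v = (1 - ∂ₓ²)⁻¹ u_h`. It exists
because `L⁺(a, b) = -L⁻(b, a)`, which makes the homogeneous problem force
`‖v‖² + ‖q‖² = 0`. Testing the time-differentiated (i), (ii) and the equations (iii), (iv)
with `v` and `q` gives `(∂ₜu_h, u_h) = -N^d(u_h, u_h) + L⁺(v, v) + L⁺(q, q)`. Here
`L⁺(ω, ω) = -½ Σ [ω]² ≤ 0`, and the Godunov flux makes `N^d(u_h, u_h) ≥ 0` through the cell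
entropy inequality with entropy flux `F' = f`.
-/

open intervalIntegral

namespace FW

variable {N : ℕ}

section Cells

def cellInt (c d : ℝ) : ℝ[X] →ₗ[ℝ] ℝ where
  toFun Q := ∫ y in c..d, Q.eval y
  map_add' P Q := by
    simp only [eval_add]
    exact integral_add (P.continuous.intervalIntegrable c d) (Q.continuous.intervalIntegrable c d)
  map_smul' a P := by
    simp only [eval_smul, RingHom.id_apply, smul_eq_mul]
    exact integral_const_mul a _

lemma cellInt_apply (c d : ℝ) (Q : ℝ[X]) : cellInt c d Q = ∫ y in c..d, Q.eval y := rfl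

lemma cellInt_derivative (c d : ℝ) (Q : ℝ[X]) : cellInt c d (derivative Q) = Q.eval d - Q.eval c :=
  integral_eq_sub_of_hasDerivAt (fun y _ => Q.hasDerivAt y)
    ((derivative Q).continuous.intervalIntegrable c d)

lemma ipj_eq_cellInt (x : Fin (N + 1) → ℝ) (ω : Fin N → ℝ[X]) (j : Fin N) (φ : ℝ[X]) :
    ipj x ω j φ = cellInt (x j.castSucc) (x j.succ) (ω j * φ) := by
  simp [ipj, cellInt_apply]

lemma ipj_comm (x : Fin (N + 1) → ℝ) (ω φ : Fin N → ℝ[X]) (j : Fin N) :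
    ipj x ω j (φ j) = ipj x φ j (ω j) := by
  rw [ipj_eq_cellInt, ipj_eq_cellInt, mul_comm]

lemma ipj_derivative_add_ipj_derivative (x : Fin (N + 1) → ℝ) (ω φ : Fin N → ℝ[X]) (j : Fin N) :
    ipj x ω j (derivative (φ j)) + ipj x φ j (derivative (ω j)) =
      (ω j * φ j).eval (x j.succ) - (ω j * φ j).eval (x j.castSucc) := by
  rw [ipj_eq_cellInt, ipj_eq_cellInt, ← map_add, ← cellInt_derivative, derivative_mul, add_comm,
    mul_comm (φ j)]

lemma integral_eval_sq_pos {c d : ℝ} (hcd : c < d) {P : ℝ[X]} (hP : P ≠ 0) :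
    0 < ∫ y in c..d, P.eval y ^ 2 := by
  obtain ⟨y, hy, hPy : P.eval y ≠ 0⟩ :=
    (Icc_infinite hcd).exists_notMem_finite (finite_setOfPred_isRoot hP)
  simpa using integral_lt_integral_of_continuousOn_of_le_of_exists_lt hcd continuousOn_const
    (P.continuous.pow 2).continuousOn (fun y _ => sq_nonneg (P.eval y))
    ⟨y, hy, sq_pos_of_ne_zero hPy⟩

end Cells

section Forms

variable (x : Fin (N + 1) → ℝ)

def l2Form : (Fin N → ℝ[X]) →ₗ[ℝ] (Fin N → ℝ[X]) →ₗ[ℝ] ℝ :=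
  LinearMap.mk₂ ℝ (fun ω φ => ∑ j, ipj x ω j (φ j))
    (fun _ _ _ => by
      simp only [ipj_eq_cellInt, Pi.add_apply, add_mul, map_add, Finset.sum_add_distrib])
    (fun _ _ _ => by
      simp only [ipj_eq_cellInt, Pi.smul_apply, smul_mul_assoc, map_smul, smul_eq_mul,
        Finset.mul_sum])
    (fun _ _ _ => by
      simp only [ipj_eq_cellInt, Pi.add_apply, mul_add, map_add, Finset.sum_add_distrib])
    (fun _ _ _ => by
      simp only [ipj_eq_cellInt, Pi.smul_apply, mul_smul_comm, map_smul, smul_eq_mul,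
        Finset.mul_sum])

lemma l2Form_apply (ω φ : Fin N → ℝ[X]) : l2Form x ω φ = ∑ j, ipj x ω j (φ j) := rfl

lemma l2Form_comm (ω φ : Fin N → ℝ[X]) : l2Form x ω φ = l2Form x φ ω := by
  rw [l2Form_apply, l2Form_apply]
  exact Finset.sum_congr rfl fun j _ => ipj_comm x ω φ j

lemma l2Form_const_one (ω : Fin N → ℝ[X]) :
    l2Form x ω (fun _ => 1) = ∑ j, ∫ y in (x j.castSucc)..(x j.succ), (ω j).eval y := by
  simp [l2Form_apply, ipj]

lemma l2Form_self (ω : Fin N → ℝ[X]) :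
    l2Form x ω ω = ∑ j, ∫ y in (x j.castSucc)..(x j.succ), (ω j).eval y ^ 2 := by
  simp [l2Form_apply, ipj, sq]

lemma l2Form_self_pos {x : Fin (N + 1) → ℝ} (hx : StrictMono x) {ω : Fin N → ℝ[X]} (hω : ω ≠ 0) :
    0 < l2Form x ω ω := by
  obtain ⟨i, hi⟩ := Function.ne_iff.mp hω
  have hcell : ∀ j : Fin N, x j.castSucc < x j.succ := fun j => hx j.castSucc_lt_succ
  rw [l2Form_self]
  exact Finset.sum_pos' (fun j _ => integral_nonneg (hcell j).le fun y _ => sq_nonneg _)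
    ⟨i, Finset.mem_univ i, integral_eval_sq_pos (hcell i) hi⟩

end Forms

section Space

def Vh (N k : ℕ) : Submodule ℝ (Fin N → ℝ[X]) where
  carrier := {ω | memV k ω}
  add_mem' ha hb j := (degree_add_le _ _).trans (max_le (ha j) (hb j))
  zero_mem' j := by simp
  smul_mem' c _ hω j := (degree_smul_le c _).trans (hω j)

lemma const_one_mem_Vh {k : ℕ} : (fun _ => 1 : Fin N → ℝ[X]) ∈ Vh N k :=
  fun _ => degree_one_le.trans (by exact_mod_cast k.zero_le)

instance (k : ℕ) : FiniteDimensional ℝ (Vh N k) :=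
  Module.Finite.of_injective
    (LinearMap.pi fun j => LinearMap.codRestrict (degreeLT ℝ (k + 1))
      (LinearMap.proj j ∘ₗ (Vh N k).subtype)
      fun ω => by rw [degreeLT_succ_eq_degreeLE]; exact mem_degreeLE.mpr (ω.2 j))
    fun _ _ h => Subtype.ext <| _root_.funext fun j => by
      simpa using congrArg Subtype.val (congrFun h j)

end Space

section Adjoint

variable {E : Type*} [AddCommGroup E] [Module ℝ E] {V : Submodule ℝ E}
  {B L M : E →ₗ[ℝ] E →ₗ[ℝ] ℝ}

/-- The discrete counterpart of solving `v - ∂ₓ² v = U` in the mixed form `r = ∂ₓ v`,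
`v - ∂ₓ r = U`. -/
theorem exists_solution_of_adjoint [FiniteDimensional ℝ V] (hB : ∀ v ∈ V, v ≠ 0 → 0 < B v v)
    (hLM : ∀ a b, L a b + M b a = 0) (U : E) :
    ∃ v ∈ V, ∃ r ∈ V, (∀ φ ∈ V, B r φ = L v φ) ∧ ∀ φ ∈ V, B v φ - M r φ = B U φ := by
  have hB0 : ∀ v ∈ V, 0 ≤ B v v := fun v hv => by
    rcases eq_or_ne v 0 with rfl | hv0
    · simp
    · exact (hB v hv hv0).le
  let B' := B.domRestrict₁₂ V V
  let Φ : V × V →ₗ[ℝ] Module.Dual ℝ V × Module.Dual ℝ V :=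
    ((B' ∘ₗ LinearMap.snd ℝ V V) - L.domRestrict₁₂ V V ∘ₗ LinearMap.fst ℝ V V).prod
      ((B' ∘ₗ LinearMap.fst ℝ V V) - M.domRestrict₁₂ V V ∘ₗ LinearMap.snd ℝ V V)
  have hinj : Function.Injective Φ := by
    rw [← LinearMap.ker_eq_bot, LinearMap.ker_eq_bot']
    rintro ⟨v, r⟩ h
    have h₁ : B r r = L v r := sub_eq_zero.mp (LinearMap.congr_fun (congrArg Prod.fst h) r)
    have h₂ : B v v = M r v := sub_eq_zero.mp (LinearMap.congr_fun (congrArg Prod.snd h) v)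
    have hsum : B v v + B r r = 0 := by linarith [hLM v r]
    have hv := hB0 v v.2
    have hr := hB0 r r.2
    have hv0 : (v : E) = 0 := by_contra fun hv0 => (hB v v.2 hv0).ne' (by linarith)
    have hr0 : (r : E) = 0 := by_contra fun hr0 => (hB r r.2 hr0).ne' (by linarith)
    simp [Subtype.ext_iff, hv0, hr0]
  have hsurj : Function.Surjective Φ :=
    (LinearMap.injective_iff_surjective_of_finrank_eq_finrank (by
      simp [Module.finrank_prod, Subspace.dual_finrank_eq])).mp hinj
  obtain ⟨⟨v, r⟩, h⟩ := hsurj (0, (B U).domRestrict V)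
  refine ⟨v, v.2, r, r.2, fun φ hφ => ?_, fun φ hφ => ?_⟩
  · exact sub_eq_zero.mp (LinearMap.congr_fun (congrArg Prod.fst h) ⟨φ, hφ⟩)
  · exact LinearMap.congr_fun (congrArg Prod.snd h) ⟨φ, hφ⟩

theorem energy_identity (hBc : ∀ a b, B a b = B b a) (hLM : ∀ a b, L a b + M b a = 0)
    {U U' R' W' P S v r : E} (hU' : U' ∈ V) (hR' : R' ∈ V) (hP : P ∈ V) (hS : S ∈ V)
    (hv : v ∈ V) (hr : r ∈ V)
    (h₁ : ∀ φ ∈ V, B U' φ - M R' φ = B W' φ) (h₂ : ∀ φ ∈ V, B R' φ = L U' φ)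
    (h₃ : ∀ φ ∈ V, B W' φ + B S φ = M P φ) (h₄ : ∀ φ ∈ V, B P φ = L S φ - B U φ)
    (hvU : ∀ φ ∈ V, B v φ - M r φ = B U φ) (hrv : ∀ φ ∈ V, B r φ = L v φ) :
    B U' U = -B S U + L v v + L r r := by
  linarith [hBc U' U, hvU U' hU', hLM U' r, h₂ r hr, h₁ v hv, hLM v R', hrv R' hR', hBc v U',
    hBc R' r, h₃ v hv, hLM v P, hrv P hP, h₄ r hr, hLM S r, hvU S hS, hvU r hr, hBc v r,
    hrv v hv, hLM r r, hBc P r, hBc S v, hBc U S]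

theorem apply_le_neg_of_adjoint [FiniteDimensional ℝ V] (hB : ∀ v ∈ V, v ≠ 0 → 0 < B v v)
    (hBc : ∀ a b, B a b = B b a) (hLM : ∀ a b, L a b + M b a = 0) (hL : ∀ a ∈ V, L a a ≤ 0)
    {U U' R' W' P S : E} (hU' : U' ∈ V) (hR' : R' ∈ V) (hP : P ∈ V) (hS : S ∈ V)
    (h₁ : ∀ φ ∈ V, B U' φ - M R' φ = B W' φ) (h₂ : ∀ φ ∈ V, B R' φ = L U' φ)
    (h₃ : ∀ φ ∈ V, B W' φ + B S φ = M P φ) (h₄ : ∀ φ ∈ V, B P φ = L S φ - B U φ) :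
    B U' U ≤ -B S U := by
  obtain ⟨v, hv, r, hr, hrv, hvU⟩ := exists_solution_of_adjoint hB hLM U
  rw [energy_identity hBc hLM hU' hR' hP hS hv hr h₁ h₂ h₃ h₄ hvU hrv]
  linarith [hL v hv, hL r hr]

end Adjoint

section TimeDerivative

variable {S : Set ℝ} {t : ℝ}

/-- `ℝ[X]` carries no norm here, so time derivatives of polynomial-valued families are taken
coefficientwise. -/
def HasCoeffDerivWithinAt (P : ℝ → ℝ[X]) (P' : ℝ[X]) (S : Set ℝ) (t : ℝ) : Prop :=
  ∀ m, HasDerivWithinAt (fun σ => (P σ).coeff m) (P'.coeff m) S t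

lemma HasCoeffDerivWithinAt.mul {P Q : ℝ → ℝ[X]} {P' Q' : ℝ[X]}
    (hP : HasCoeffDerivWithinAt P P' S t) (hQ : HasCoeffDerivWithinAt Q Q' S t) :
    HasCoeffDerivWithinAt (fun σ => P σ * Q σ) (P' * Q t + P t * Q') S t := by
  intro m
  simp only [coeff_mul, coeff_add, ← Finset.sum_add_distrib]
  exact HasDerivWithinAt.fun_sum fun n _ => (hP n.1).mul (hQ n.2)

/-- A polynomial of degree at most `K` is a fixed linear combination of its first `K + 1`
coefficients, so linear functionals inherit the coefficientwise derivative. -/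
lemma HasCoeffDerivWithinAt.hasDerivWithinAt_map {P : ℝ → ℝ[X]} {P' : ℝ[X]} {K : ℕ}
    (hP : HasCoeffDerivWithinAt P P' S t) (hdeg : ∀ σ ∈ S, (P σ).degree ≤ K)
    (hdeg' : P'.degree ≤ K) (ht : t ∈ S) (G : ℝ[X] →ₗ[ℝ] ℝ) :
    HasDerivWithinAt (fun σ => G (P σ)) (G P') S t := by
  have hexpand : ∀ Q : ℝ[X], Q.degree ≤ K →
      G Q = ∑ m ∈ Finset.range (K + 1), Q.coeff m * G (X ^ m) := fun Q hQ => by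
    conv_lhs => rw [Q.as_sum_range' (K + 1) (Nat.lt_succ_of_le (natDegree_le_iff_degree_le.mpr hQ))]
    simp only [map_sum, ← smul_X_eq_monomial, map_smul, smul_eq_mul]
  rw [hexpand P' hdeg']
  exact (HasDerivWithinAt.fun_sum fun m _ => (hP m).mul_const _).congr
    (fun σ hσ => hexpand _ (hdeg σ hσ)) (hexpand _ (hdeg t ht))

def HasVhDerivWithinAt (k : ℕ) (v : ℝ → Fin N → ℝ[X]) (v' : Fin N → ℝ[X]) (S : Set ℝ)
    (t : ℝ) : Prop :=
  (∀ σ ∈ S, memV k (v σ)) ∧ memV k v' ∧ ∀ j, HasCoeffDerivWithinAt (fun σ => v σ j) (v' j) S t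

variable {k : ℕ} {v : ℝ → Fin N → ℝ[X]} {v' : Fin N → ℝ[X]}

lemma HasVhDerivWithinAt.hasDerivWithinAt_map (hv : HasVhDerivWithinAt k v v' S t) (ht : t ∈ S)
    (G : (Fin N → ℝ[X]) →ₗ[ℝ] ℝ) : HasDerivWithinAt (fun σ => G (v σ)) (G v') S t := by
  obtain ⟨hdeg, hdeg', hv⟩ := hv
  have hsplit : ∀ ω : Fin N → ℝ[X], G ω = ∑ j, (G ∘ₗ LinearMap.single ℝ _ j) (ω j) := fun ω => by
    conv_lhs => rw [← Finset.univ_sum_single ω]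
    simp [map_sum]
  simp only [hsplit]
  exact HasDerivWithinAt.fun_sum fun j _ =>
    (hv j).hasDerivWithinAt_map (fun σ hσ => hdeg σ hσ j) (hdeg' j) ht _

lemma HasVhDerivWithinAt.map_sub_map_eq {r w : ℝ → Fin N → ℝ[X]} {r' w' : Fin N → ℝ[X]}
    (hS : UniqueDiffOn ℝ S) (ht : t ∈ S) (hv : HasVhDerivWithinAt k v v' S t)
    (hr : HasVhDerivWithinAt k r r' S t) (hw : HasVhDerivWithinAt k w w' S t)
    (G₁ G₂ G₃ : (Fin N → ℝ[X]) →ₗ[ℝ] ℝ) (h : ∀ σ ∈ S, G₁ (v σ) - G₂ (r σ) = G₃ (w σ)) :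
    G₁ v' - G₂ r' = G₃ w' :=
  (hS t ht).eq_deriv S ((hv.hasDerivWithinAt_map ht G₁).sub (hr.hasDerivWithinAt_map ht G₂))
    ((hw.hasDerivWithinAt_map ht G₃).congr h (h t ht))

lemma HasVhDerivWithinAt.map_eq {w : ℝ → Fin N → ℝ[X]} {w' : Fin N → ℝ[X]}
    (hS : UniqueDiffOn ℝ S) (ht : t ∈ S) (hv : HasVhDerivWithinAt k v v' S t)
    (hw : HasVhDerivWithinAt k w w' S t) (G₁ G₂ : (Fin N → ℝ[X]) →ₗ[ℝ] ℝ)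
    (h : ∀ σ ∈ S, G₁ (v σ) = G₂ (w σ)) : G₁ v' = G₂ w' :=
  (hS t ht).eq_deriv S (hv.hasDerivWithinAt_map ht G₁)
    ((hw.hasDerivWithinAt_map ht G₂).congr h (h t ht))

lemma HasVhDerivWithinAt.hasDerivWithinAt_sum_integral_sq (x : Fin (N + 1) → ℝ)
    (hv : HasVhDerivWithinAt k v v' S t) (ht : t ∈ S) :
    HasDerivWithinAt (fun σ => ∑ j, ∫ y in (x j.castSucc)..(x j.succ), (v σ j).eval y ^ 2)
      (2 * l2Form x v' (v t)) S t := by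
  obtain ⟨hdeg, hdeg', hv⟩ := hv
  simp only [← l2Form_self]
  have hmul : ∀ {P Q : ℝ[X]}, P.degree ≤ k → Q.degree ≤ k → (P * Q).degree ≤ ↑(k + k) :=
    fun hP hQ => (degree_mul_le _ _).trans (by push_cast; exact add_le_add hP hQ)
  have hcell : ∀ j, HasDerivWithinAt (fun σ => ipj x (v σ) j (v σ j))
      (ipj x v' j (v t j) + ipj x (v t) j (v' j)) S t := fun j => by
    simp only [ipj_eq_cellInt, ← map_add]
    exact ((hv j).mul (hv j)).hasDerivWithinAt_map (fun σ hσ => hmul (hdeg σ hσ j) (hdeg σ hσ j))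
      ((degree_add_le _ _).trans (max_le (hmul (hdeg' j) (hdeg t ht j))
        (hmul (hdeg t ht j) (hdeg' j)))) ht _
  have hsum := HasDerivWithinAt.fun_sum (u := Finset.univ) fun j _ => hcell j
  rwa [Finset.sum_add_distrib, ← l2Form_apply, ← l2Form_apply, l2Form_comm x (v t), ← two_mul]
    at hsum

end TimeDerivative

section Periodic

variable [NeZero N]

lemma sum_comp_sub_one (g : Fin N → ℝ) : ∑ j, g (j - 1) = ∑ j, g j :=
  Fintype.sum_equiv (Equiv.subRight 1) _ _ fun _ => rfl

lemma sum_sub_comp_sub_one (g : Fin N → ℝ) : ∑ j, (g j - g (j - 1)) = 0 := by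
  rw [Finset.sum_sub_distrib, sum_comp_sub_one, sub_self]

lemma sum_bdj_one (x : Fin (N + 1) → ℝ) (g : Fin N → ℝ) : ∑ j, bdj x g j 1 = 0 := by
  simpa [bdj] using sum_sub_comp_sub_one g

lemma trP_sub_one (x : Fin (N + 1) → ℝ) (ω : Fin N → ℝ[X]) (j : Fin N) :
    trP x ω (j - 1) = (ω j).eval (x j.castSucc) := by
  simp [trP]

section Fluxes

lemma Lp_add_Lm (x : Fin (N + 1) → ℝ) (ω φ : Fin N → ℝ[X]) : Lp x ω φ + Lm x φ ω = 0 := by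
  have hcell : ∀ j : Fin N,
      -ipj x ω j (derivative (φ j)) + bdj x (trP x ω) j (φ j)
        + (-ipj x φ j (derivative (ω j)) + bdj x (trM x φ) j (ω j)) =
      trP x ω j * trM x φ j - trP x ω (j - 1) * trM x φ (j - 1) := by
    intro j
    have hibp := ipj_derivative_add_ipj_derivative x ω φ j
    simp only [eval_mul] at hibp
    simp only [bdj, trM, trP, sub_add_cancel] at hibp ⊢
    linarith
  rw [Lp, Lm, ← Finset.sum_add_distrib, Finset.sum_congr rfl fun j _ => hcell j,
    sum_sub_comp_sub_one fun j => trP x ω j * trM x φ j]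

lemma Lp_self (x : Fin (N + 1) → ℝ) (ω : Fin N → ℝ[X]) :
    Lp x ω ω = -(∑ j, jmp x ω j ^ 2) / 2 := by
  have hcell : ∀ j : Fin N,
      -ipj x ω j (derivative (ω j)) + bdj x (trP x ω) j (ω j)
        - (-ipj x ω j (derivative (ω j)) + bdj x (trM x ω) j (ω j)) =
      -jmp x ω j ^ 2 + (jmp x ω j * trP x ω j - jmp x ω (j - 1) * trP x ω (j - 1)) := by
    intro j
    simp only [bdj, jmp, trM, trP, sub_add_cancel]
    ring
  have hdiff : Lp x ω ω - Lm x ω ω = -∑ j, jmp x ω j ^ 2 := by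
    rw [Lp, Lm, ← Finset.sum_sub_distrib, Finset.sum_congr rfl fun j _ => hcell j,
      Finset.sum_add_distrib, sum_sub_comp_sub_one fun j => jmp x ω j * trP x ω j,
      Finset.sum_neg_distrib, add_zero]
  linarith [Lp_add_Lm x ω ω]

lemma Lp_self_nonpos (x : Fin (N + 1) → ℝ) (ω : Fin N → ℝ[X]) : Lp x ω ω ≤ 0 := by
  rw [Lp_self]
  linarith [Finset.sum_nonneg fun j (_ : j ∈ Finset.univ) => sq_nonneg (jmp x ω j)]

lemma Lm_const_one (x : Fin (N + 1) → ℝ) (ω : Fin N → ℝ[X]) : Lm x ω (fun _ => 1) = 0 := by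
  simp [Lm, ipj, sum_bdj_one]

lemma Nd_const_one (x : Fin (N + 1) → ℝ) (f : ℝ → ℝ) (ω : Fin N → ℝ[X]) :
    Nd x f ω (fun _ => 1) = 0 := by
  simp [Nd, ipfj, sum_bdj_one]

end Fluxes

section FluxForms

variable (x : Fin (N + 1) → ℝ)

def fluxForm (τ : (Fin N → ℝ[X]) →ₗ[ℝ] Fin N → ℝ) :
    (Fin N → ℝ[X]) →ₗ[ℝ] (Fin N → ℝ[X]) →ₗ[ℝ] ℝ :=
  LinearMap.mk₂ ℝ (fun ω φ => ∑ j, (-ipj x ω j (derivative (φ j)) + bdj x (τ ω) j (φ j)))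
    (fun _ _ _ => by
      simp only [ipj_eq_cellInt, bdj, map_add, Pi.add_apply, add_mul, ← Finset.sum_add_distrib]
      exact Finset.sum_congr rfl fun j _ => by ring)
    (fun _ _ _ => by
      simp only [ipj_eq_cellInt, bdj, map_smul, Pi.smul_apply, smul_mul_assoc, smul_eq_mul,
        Finset.mul_sum]
      exact Finset.sum_congr rfl fun j _ => by ring)
    (fun _ _ _ => by
      simp only [ipj_eq_cellInt, bdj, map_add, Pi.add_apply, eval_add, mul_add,
        ← Finset.sum_add_distrib]
      exact Finset.sum_congr rfl fun j _ => by ring)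
    (fun _ _ _ => by
      simp only [ipj_eq_cellInt, bdj, map_smul, Pi.smul_apply, eval_smul,
        mul_smul_comm, smul_eq_mul, Finset.mul_sum]
      exact Finset.sum_congr rfl fun j _ => by ring)

def trPₗ : (Fin N → ℝ[X]) →ₗ[ℝ] Fin N → ℝ :=
  LinearMap.pi fun j => leval (x (j + 1).castSucc) ∘ₗ LinearMap.proj (j + 1)

def trMₗ : (Fin N → ℝ[X]) →ₗ[ℝ] Fin N → ℝ :=
  LinearMap.pi fun j => leval (x j.succ) ∘ₗ LinearMap.proj j

lemma fluxForm_trPₗ (ω φ : Fin N → ℝ[X]) : fluxForm x (trPₗ x) ω φ = Lp x ω φ := rfl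

lemma fluxForm_trMₗ (ω φ : Fin N → ℝ[X]) : fluxForm x (trMₗ x) ω φ = Lm x ω φ := rfl

end FluxForms

section Entropy

variable {f F : ℝ → ℝ}

lemma godunov_entropy (hf : Continuous f) (hF : ∀ y, HasDerivAt F (f y) y) (c d : ℝ) :
    0 ≤ godunov f c d * (c - d) + (F d - F c) := by
  have hFTC : ∀ a b, ∫ y in a..b, f y = F b - F a := fun a b =>
    integral_eq_sub_of_hasDerivAt (fun y _ => hF y) (hf.intervalIntegrable a b)
  have hbdd : ∀ a b, BddBelow (f '' Icc a b) ∧ BddAbove (f '' Icc a b) := fun a b =>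
    ⟨(isCompact_Icc.image hf).bddBelow, (isCompact_Icc.image hf).bddAbove⟩
  unfold godunov
  split_ifs with hcd
  · have hle := integral_mono_on hcd.le (intervalIntegrable_const (μ := MeasureTheory.volume))
      (hf.intervalIntegrable c d)
      fun y hy => csInf_le (hbdd c d).1 (mem_image_of_mem f hy)
    rw [integral_const, hFTC, smul_eq_mul] at hle
    nlinarith
  · have hle := integral_mono_on (not_lt.mp hcd) (hf.intervalIntegrable d c)
      (intervalIntegrable_const (μ := MeasureTheory.volume))
      fun y hy => le_csSup (hbdd d c).2 (mem_image_of_mem f hy)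
    rw [integral_const, hFTC, smul_eq_mul] at hle
    nlinarith

lemma ipfj_derivative_self (hf : Continuous f) (hF : ∀ y, HasDerivAt F (f y) y)
    (x : Fin (N + 1) → ℝ) (ω : Fin N → ℝ[X]) (j : Fin N) :
    ipfj x f ω j (derivative (ω j)) = F (trM x ω j) - F (trP x ω (j - 1)) := by
  rw [trP_sub_one, ipfj]
  exact integral_eq_sub_of_hasDerivAt
    (fun y _ => by simpa using (hF ((ω j).eval y)).comp y ((ω j).hasDerivAt y))
    (((hf.comp (ω j).continuous).mul (derivative (ω j)).continuous).intervalIntegrable _ _)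

/-- Cell entropy inequality: with `F' = f`, each cell contributes the nonnegative
`godunov_entropy` defect at its right interface plus a term that telescopes. -/
lemma Nd_self_nonneg (hf : Continuous f) (hF : ∀ y, HasDerivAt F (f y) y)
    (x : Fin (N + 1) → ℝ) (ω : Fin N → ℝ[X]) : 0 ≤ Nd x f ω ω := by
  set g : Fin N → ℝ := fun i => godunov f (trM x ω i) (trP x ω i)
  have hcell : ∀ j : Fin N, -ipfj x f ω j (derivative (ω j)) + bdj x g j (ω j) =
      (g j * (trM x ω j - trP x ω j) + (F (trP x ω j) - F (trM x ω j)))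
        + ((g j * trP x ω j - F (trP x ω j))
          - (g (j - 1) * trP x ω (j - 1) - F (trP x ω (j - 1)))) := by
    intro j
    rw [ipfj_derivative_self hf hF, bdj, ← trP_sub_one]
    simp only [trM]
    ring
  rw [Nd, Finset.sum_congr rfl fun j _ => hcell j, Finset.sum_add_distrib,
    sum_sub_comp_sub_one fun j => g j * trP x ω j - F (trP x ω j), add_zero]
  exact Finset.sum_nonneg fun j _ => godunov_entropy hf hF _ _

end Entropy

section WeakForm

variable {x : Fin (N + 1) → ℝ} {k : ℕ} {u r w ph s : Fin N → ℝ[X]}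

lemma l2Form_sub_Lm_eq_of_cells
    (h : ∀ j φ, φ.degree ≤ (k : WithBot ℕ) →
      ipj x u j φ - bdj x (trM x r) j φ + ipj x r j (derivative φ) = ipj x w j φ) :
    ∀ φ ∈ Vh N k, l2Form x u φ - fluxForm x (trMₗ x) r φ = l2Form x w φ := fun φ hφ => by
  rw [l2Form_apply, l2Form_apply, fluxForm_trMₗ, Lm, ← Finset.sum_sub_distrib]
  exact Finset.sum_congr rfl fun j _ => by linarith [h j (φ j) (hφ j)]

lemma l2Form_eq_Lp_of_cells
    (h : ∀ j φ, φ.degree ≤ (k : WithBot ℕ) →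
      ipj x r j φ - bdj x (trP x u) j φ + ipj x u j (derivative φ) = 0) :
    ∀ φ ∈ Vh N k, l2Form x r φ = fluxForm x (trPₗ x) u φ := fun φ hφ => by
  rw [l2Form_apply, fluxForm_trPₗ, Lp]
  exact Finset.sum_congr rfl fun j _ => by linarith [h j (φ j) (hφ j)]

lemma l2Form_add_eq_Lm_of_cells
    (h : ∀ j φ, φ.degree ≤ (k : WithBot ℕ) →
      ipj x w j φ + ipj x s j φ = bdj x (trM x ph) j φ - ipj x ph j (derivative φ)) :
    ∀ φ ∈ Vh N k, l2Form x w φ + l2Form x s φ = fluxForm x (trMₗ x) ph φ := fun φ hφ => by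
  rw [l2Form_apply, l2Form_apply, fluxForm_trMₗ, Lm, ← Finset.sum_add_distrib]
  exact Finset.sum_congr rfl fun j _ => by linarith [h j (φ j) (hφ j)]

lemma l2Form_eq_Lp_sub_of_cells
    (h : ∀ j φ, φ.degree ≤ (k : WithBot ℕ) →
      ipj x ph j φ = bdj x (trP x s) j φ - ipj x s j (derivative φ) - ipj x u j φ) :
    ∀ φ ∈ Vh N k, l2Form x ph φ = fluxForm x (trPₗ x) s φ - l2Form x u φ := fun φ hφ => by
  rw [l2Form_apply, l2Form_apply, fluxForm_trPₗ, Lp, ← Finset.sum_sub_distrib]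
  exact Finset.sum_congr rfl fun j _ => by linarith [h j (φ j) (hφ j)]

lemma l2Form_eq_Nd_of_cells {f : ℝ → ℝ}
    (h : ∀ j φ, φ.degree ≤ (k : WithBot ℕ) →
      ipj x s j φ = bdj x (fun i => godunov f (trM x u i) (trP x u i)) j φ
        - ipfj x f u j (derivative φ)) :
    ∀ φ ∈ Vh N k, l2Form x s φ = Nd x f u φ := fun φ hφ => by
  rw [l2Form_apply, Nd]
  exact Finset.sum_congr rfl fun j _ => by linarith [h j (φ j) (hφ j)]

end WeakForm

section Estimates

variable {x : Fin (N + 1) → ℝ} {k : ℕ} {u u' r' w' ph s : Fin N → ℝ[X]}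

lemma l2Form_const_one_eq_zero {f : ℝ → ℝ}
    (h₃ : ∀ φ ∈ Vh N k, l2Form x w' φ + l2Form x s φ = fluxForm x (trMₗ x) ph φ)
    (h₅ : ∀ φ ∈ Vh N k, l2Form x s φ = Nd x f u φ) : l2Form x w' (fun _ => 1) = 0 := by
  have h₃₁ := h₃ _ const_one_mem_Vh
  rw [fluxForm_trMₗ, Lm_const_one, h₅ _ const_one_mem_Vh, Nd_const_one] at h₃₁
  linarith

theorem l2Form_le_zero_of_scheme (hx : StrictMono x) {f F : ℝ → ℝ} (hf : Continuous f)
    (hF : ∀ y, HasDerivAt F (f y) y) (hu' : memV k u') (hr' : memV k r') (hph : memV k ph)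
    (hs : memV k s)
    (h₁ : ∀ φ ∈ Vh N k, l2Form x u' φ - fluxForm x (trMₗ x) r' φ = l2Form x w' φ)
    (h₂ : ∀ φ ∈ Vh N k, l2Form x r' φ = fluxForm x (trPₗ x) u' φ)
    (h₃ : ∀ φ ∈ Vh N k, l2Form x w' φ + l2Form x s φ = fluxForm x (trMₗ x) ph φ)
    (h₄ : ∀ φ ∈ Vh N k, l2Form x ph φ = fluxForm x (trPₗ x) s φ - l2Form x u φ)
    (h₅ : l2Form x s u = Nd x f u u) : l2Form x u' u ≤ 0 := by
  have hle := apply_le_neg_of_adjoint (fun _ _ hv => l2Form_self_pos hx hv) (l2Form_comm x)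
    (Lp_add_Lm x) (fun a _ => Lp_self_nonpos x a) hu' hr' hph hs h₁ h₂ h₃ h₄
  linarith [Nd_self_nonneg hf hF x u]

end Estimates

end Periodic

lemma hasDerivAt_pow_succ_div (p : ℕ) (y : ℝ) :
    HasDerivAt (fun z : ℝ => z ^ (p + 1) / (p + 1) / p) (y ^ p / p) y := by
  refine (((hasDerivAt_pow (p + 1) y).div_const ((p : ℝ) + 1)).div_const (p : ℝ)).congr_deriv ?_
  rw [Nat.add_sub_cancel, Nat.cast_add_one,
    mul_div_cancel_left₀ _ (by positivity : (p : ℝ) + 1 ≠ 0)]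

end FW

open FW

theorem stmt15_general {N : ℕ} [NeZero N]
    (x : Fin (N + 1) → ℝ) (hx : StrictMono x)
    (k : ℕ) (p : ℕ) (T : ℝ) (hT : 0 < T)
    (u u' r r' w w' ph s : ℝ → Fin N → Polynomial ℝ)
    (hdeg : ∀ t ∈ Set.Icc (0:ℝ) T,
      FW.memV k (u t) ∧ FW.memV k (u' t) ∧ FW.memV k (r t) ∧ FW.memV k (r' t)
        ∧ FW.memV k (w t) ∧ FW.memV k (w' t) ∧ FW.memV k (ph t) ∧ FW.memV k (s t))
    (hderu : ∀ t ∈ Set.Icc (0:ℝ) T, ∀ (j : Fin N) (m : ℕ),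
      HasDerivWithinAt (fun σ => (u σ j).coeff m) ((u' t j).coeff m) (Set.Icc (0:ℝ) T) t)
    (hderr : ∀ t ∈ Set.Icc (0:ℝ) T, ∀ (j : Fin N) (m : ℕ),
      HasDerivWithinAt (fun σ => (r σ j).coeff m) ((r' t j).coeff m) (Set.Icc (0:ℝ) T) t)
    (hderw : ∀ t ∈ Set.Icc (0:ℝ) T, ∀ (j : Fin N) (m : ℕ),
      HasDerivWithinAt (fun σ => (w σ j).coeff m) ((w' t j).coeff m) (Set.Icc (0:ℝ) T) t)
    (heq1 : ∀ t ∈ Set.Icc (0:ℝ) T, ∀ (j : Fin N), ∀ φ : Polynomial ℝ,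
      φ.degree ≤ (k : WithBot ℕ) →
      FW.ipj x (u t) j φ - FW.bdj x (FW.trM x (r t)) j φ
          + FW.ipj x (r t) j (Polynomial.derivative φ)
        = FW.ipj x (w t) j φ)
    (heq2 : ∀ t ∈ Set.Icc (0:ℝ) T, ∀ (j : Fin N), ∀ φ : Polynomial ℝ,
      φ.degree ≤ (k : WithBot ℕ) →
      FW.ipj x (r t) j φ - FW.bdj x (FW.trP x (u t)) j φ
          + FW.ipj x (u t) j (Polynomial.derivative φ) = 0)
    (heq3 : ∀ t ∈ Set.Icc (0:ℝ) T, ∀ (j : Fin N), ∀ φ : Polynomial ℝ,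
      φ.degree ≤ (k : WithBot ℕ) →
      FW.ipj x (w' t) j φ + FW.ipj x (s t) j φ
        = FW.bdj x (FW.trM x (ph t)) j φ
          - FW.ipj x (ph t) j (Polynomial.derivative φ))
    (heq4 : ∀ t ∈ Set.Icc (0:ℝ) T, ∀ (j : Fin N), ∀ φ : Polynomial ℝ,
      φ.degree ≤ (k : WithBot ℕ) →
      FW.ipj x (ph t) j φ
        = FW.bdj x (FW.trP x (s t)) j φ
          - FW.ipj x (s t) j (Polynomial.derivative φ) - FW.ipj x (u t) j φ)
    (heq5 : ∀ t ∈ Set.Icc (0:ℝ) T, ∀ (j : Fin N), ∀ φ : Polynomial ℝ,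
      φ.degree ≤ (k : WithBot ℕ) →
      FW.ipj x (s t) j φ
        = FW.bdj x (fun i => FW.godunov (fun w => w ^ p / (p : ℝ)) (FW.trM x (u t) i) (FW.trP x (u t) i)) j φ
          - FW.ipfj x (fun w => w ^ p / (p : ℝ)) (u t) j (Polynomial.derivative φ)) :
    (∀ t ∈ Set.Icc (0:ℝ) T,
      HasDerivWithinAt (fun σ => ∑ j : Fin N, ∫ y in (x j.castSucc)..(x j.succ), (w σ j).eval y) 0 (Set.Icc (0:ℝ) T) t)
    ∧ (∀ t ∈ Set.Icc (0:ℝ) T, ∃ e ≤ (0:ℝ),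
      HasDerivWithinAt (fun σ => ∑ j : Fin N, ∫ y in (x j.castSucc)..(x j.succ), ((u σ j).eval y) ^ 2) e (Set.Icc (0:ℝ) T) t) := by
  have hS : UniqueDiffOn ℝ (Icc (0 : ℝ) T) := uniqueDiffOn_Icc hT
  have hu : ∀ t ∈ Icc 0 T, HasVhDerivWithinAt k u (u' t) (Icc 0 T) t :=
    fun t ht => ⟨fun σ hσ => (hdeg σ hσ).1, (hdeg t ht).2.1, hderu t ht⟩
  have hr : ∀ t ∈ Icc 0 T, HasVhDerivWithinAt k r (r' t) (Icc 0 T) t :=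
    fun t ht => ⟨fun σ hσ => (hdeg σ hσ).2.2.1, (hdeg t ht).2.2.2.1, hderr t ht⟩
  have hw : ∀ t ∈ Icc 0 T, HasVhDerivWithinAt k w (w' t) (Icc 0 T) t :=
    fun t ht => ⟨fun σ hσ => (hdeg σ hσ).2.2.2.2.1, (hdeg t ht).2.2.2.2.2.1, hderw t ht⟩
  have h₃ := fun t ht => l2Form_add_eq_Lm_of_cells (heq3 t ht)
  have h₅ := fun t ht => l2Form_eq_Nd_of_cells (heq5 t ht)
  refine ⟨fun t ht => ?_, fun t ht => ?_⟩
  · have hmass := (hw t ht).hasDerivWithinAt_map ht ((l2Form x).flip fun _ => 1)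
    rw [LinearMap.flip_apply, l2Form_const_one_eq_zero (h₃ t ht) (h₅ t ht)] at hmass
    simpa only [LinearMap.flip_apply, l2Form_const_one] using hmass
  · refine ⟨_, ?_, (hu t ht).hasDerivWithinAt_sum_integral_sq x ht⟩
    have h₁ : ∀ φ ∈ Vh N k, l2Form x (u' t) φ - fluxForm x (trMₗ x) (r' t) φ = l2Form x (w' t) φ :=
      fun φ hφ => (hu t ht).map_sub_map_eq hS ht (hr t ht) (hw t ht)
        ((l2Form x).flip φ) ((fluxForm x (trMₗ x)).flip φ) ((l2Form x).flip φ)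
        fun σ hσ => l2Form_sub_Lm_eq_of_cells (heq1 σ hσ) φ hφ
    have h₂ : ∀ φ ∈ Vh N k, l2Form x (r' t) φ = fluxForm x (trPₗ x) (u' t) φ :=
      fun φ hφ => (hr t ht).map_eq hS ht (hu t ht)
        ((l2Form x).flip φ) ((fluxForm x (trPₗ x)).flip φ)
        fun σ hσ => l2Form_eq_Lp_of_cells (heq2 σ hσ) φ hφ
    obtain ⟨hu₀, hu', -, hr', -, -, hph, hs⟩ := hdeg t ht
    have := l2Form_le_zero_of_scheme hx (by fun_prop) (hasDerivAt_pow_succ_div p) hu' hr' hph hs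
      h₁ h₂ (h₃ t ht) (l2Form_eq_Lp_sub_of_cells (heq4 t ht)) (h₅ t ht _ hu₀)
    linarith

theorem stmt15 {N : ℕ} [NeZero N] (hN : 1 ≤ N) (a b : ℝ) (hab : a < b)
    (x : Fin (N + 1) → ℝ) (hx : StrictMono x) (hxa : x 0 = a) (hxb : x (Fin.last N) = b)
    (k : ℕ) (p : ℕ) (hp : 2 ≤ p) (T : ℝ) (hT : 0 < T)
    (u u' r r' w w' ph s : ℝ → Fin N → Polynomial ℝ)
    (hdeg : ∀ t ∈ Set.Icc (0:ℝ) T,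
      FW.memV k (u t) ∧ FW.memV k (u' t) ∧ FW.memV k (r t) ∧ FW.memV k (r' t)
        ∧ FW.memV k (w t) ∧ FW.memV k (w' t) ∧ FW.memV k (ph t) ∧ FW.memV k (s t))
    (hderu : ∀ t ∈ Set.Icc (0:ℝ) T, ∀ (j : Fin N) (m : ℕ),
      HasDerivWithinAt (fun σ => (u σ j).coeff m) ((u' t j).coeff m) (Set.Icc (0:ℝ) T) t)
    (hderr : ∀ t ∈ Set.Icc (0:ℝ) T, ∀ (j : Fin N) (m : ℕ),
      HasDerivWithinAt (fun σ => (r σ j).coeff m) ((r' t j).coeff m) (Set.Icc (0:ℝ) T) t)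
    (hderw : ∀ t ∈ Set.Icc (0:ℝ) T, ∀ (j : Fin N) (m : ℕ),
      HasDerivWithinAt (fun σ => (w σ j).coeff m) ((w' t j).coeff m) (Set.Icc (0:ℝ) T) t)
    (heq1 : ∀ t ∈ Set.Icc (0:ℝ) T, ∀ (j : Fin N), ∀ φ : Polynomial ℝ,
      φ.degree ≤ (k : WithBot ℕ) →
      FW.ipj x (u t) j φ - FW.bdj x (FW.trM x (r t)) j φ
          + FW.ipj x (r t) j (Polynomial.derivative φ)
        = FW.ipj x (w t) j φ)
    (heq2 : ∀ t ∈ Set.Icc (0:ℝ) T, ∀ (j : Fin N), ∀ φ : Polynomial ℝ,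
      φ.degree ≤ (k : WithBot ℕ) →
      FW.ipj x (r t) j φ - FW.bdj x (FW.trP x (u t)) j φ
          + FW.ipj x (u t) j (Polynomial.derivative φ) = 0)
    (heq3 : ∀ t ∈ Set.Icc (0:ℝ) T, ∀ (j : Fin N), ∀ φ : Polynomial ℝ,
      φ.degree ≤ (k : WithBot ℕ) →
      FW.ipj x (w' t) j φ + FW.ipj x (s t) j φ
        = FW.bdj x (FW.trM x (ph t)) j φ
          - FW.ipj x (ph t) j (Polynomial.derivative φ))
    (heq4 : ∀ t ∈ Set.Icc (0:ℝ) T, ∀ (j : Fin N), ∀ φ : Polynomial ℝ,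
      φ.degree ≤ (k : WithBot ℕ) →
      FW.ipj x (ph t) j φ
        = FW.bdj x (FW.trP x (s t)) j φ
          - FW.ipj x (s t) j (Polynomial.derivative φ) - FW.ipj x (u t) j φ)
    (heq5 : ∀ t ∈ Set.Icc (0:ℝ) T, ∀ (j : Fin N), ∀ φ : Polynomial ℝ,
      φ.degree ≤ (k : WithBot ℕ) →
      FW.ipj x (s t) j φ
        = FW.bdj x (fun i => FW.godunov (fun w => w ^ p / (p : ℝ)) (FW.trM x (u t) i) (FW.trP x (u t) i)) j φ
          - FW.ipfj x (fun w => w ^ p / (p : ℝ)) (u t) j (Polynomial.derivative φ)) :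
    (∀ t ∈ Set.Icc (0:ℝ) T,
      HasDerivWithinAt (fun σ => ∑ j : Fin N, ∫ y in (x j.castSucc)..(x j.succ), (w σ j).eval y) 0 (Set.Icc (0:ℝ) T) t)
    ∧ (∀ t ∈ Set.Icc (0:ℝ) T, ∃ e ≤ (0:ℝ),
      HasDerivWithinAt (fun σ => ∑ j : Fin N, ∫ y in (x j.castSucc)..(x j.succ), ((u σ j).eval y) ^ 2) e (Set.Icc (0:ℝ) T) t) :=
  stmt15_general x hx k p T hT u u' r r' w w' ph s hdeg hderu hderr hderw heq1 heq2 heq3 heq4 heq5
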